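/- arXiv:1609.09696 — 5 statements merged into one kernel-verified Lean document; each statement's English description precedes it below -/
import Mathlib

section
/- Let κ > 0, μ > 0, m > 0 and h̄ > 0 be real parameters, and set θ₁ = h̄/(μ(1+κ)) and θ₂ = (μκ+m)h̄/(μ(1+κ)m). For every s ≥ 0, the Laplace transform of the κ-μ shadowed density satisfies ∫₀^∞ e^{−s x} f(x) dx = (1 + θ₁ s)^{m−μ} (1 + θ₂ s)^{−m}. -/
open Real MeasureTheory Set Filter

/-- Pochhammer symbol `(a)_n = Γ(a+n)/Γ(a)`. -/
noncomputable def poch (a : ℝ) : ℕ → ℝ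
  | 0 => 1
  | n + 1 => poch a n * (a + n)

/-- Confluent hypergeometric function `₁F₁(a; b; x) = Σ ((a)_n/(b)_n) xⁿ/n!`. -/
noncomputable def hyp1F1 (a b x : ℝ) : ℝ :=
  ∑' n : ℕ, (poch a n / poch b n) * x ^ n / n.factorial

/-- The κ-μ shadowed probability density on `(0, ∞)`, with
`θ₁ = h̄/(μ(1+κ))` and `θ₂ = (μκ+m)h̄/(μ(1+κ)m)`:
`f(x) = (θ₁^(m−μ)/(θ₂^m Γ(μ))) x^(μ−1) e^(−x/θ₁) ₁F₁(m; μ; ((θ₂−θ₁)/(θ₁θ₂)) x)`. -/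
noncomputable def kmuPDF (κ μ m hbar x : ℝ) : ℝ :=
  (hbar / (μ * (1 + κ))) ^ (m - μ) /
      (((μ * κ + m) * hbar / (μ * (1 + κ) * m)) ^ m * Real.Gamma μ) *
    x ^ (μ - 1) * Real.exp (-x / (hbar / (μ * (1 + κ)))) *
    hyp1F1 m μ
      (((((μ * κ + m) * hbar / (μ * (1 + κ) * m)) - hbar / (μ * (1 + κ))) /
        ((hbar / (μ * (1 + κ))) * ((μ * κ + m) * hbar / (μ * (1 + κ) * m)))) * x)

/-!
Expand `₁F₁(m; μ; λx)` termwise. Against `x^(μ-1) e^(-px)` the `n`-th term is the Gamma integral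
`∫ x^(μ+n-1) e^(-px) dx = Γ(μ) (μ)_n / p^(μ+n)`, whose `(μ)_n` cancels the denominator of its
coefficient. What is left is `Γ(μ) p^(-μ)` times the binomial series
`Σ (m)_n (λ/p)^n / n! = (1 - λ/p)^(-m)`; the same computation with `|λ|` in place of `λ`
justifies exchanging sum and integral when `|λ| < p`. For the density, `p = s + 1/θ₁` and
`λ = 1/θ₁ - 1/θ₂`, so that `θ₁ p = 1 + θ₁ s` and `θ₂ (p - λ) = 1 + θ₂ s`.
-/

open scoped Nat

lemma poch_eq_eval_ascPochhammer (a : ℝ) (n : ℕ) : poch a n = (ascPochhammer ℝ n).eval a := by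
  induction n with
  | zero => simp [poch]
  | succ n ih => rw [poch, ascPochhammer_succ_eval, ih]

lemma poch_eq_factorial_mul_choose (a : ℝ) (n : ℕ) :
    poch a n = n ! * Ring.choose (a + n - 1) n := by
  rw [← Ring.multichoose_eq, ← nsmul_eq_mul, Ring.factorial_nsmul_multichoose_eq_ascPochhammer,
    Polynomial.ascPochhammer_smeval_eq_eval, poch_eq_eval_ascPochhammer]

lemma hasSum_poch_mul_pow_div_factorial (a : ℝ) {x : ℝ} (hx : |x| < 1) :
    HasSum (fun n : ℕ => poch a n * x ^ n / n !) ((1 - x) ^ (-a)) := by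
  have h := (Real.one_div_one_sub_rpow_hasFPowerSeriesOnBall_zero a).hasSum
    (y := x) (by simpa [enorm_eq_nnnorm, ← NNReal.coe_lt_coe] using hx)
  simp only [FormalMultilinearSeries.ofScalars_apply_eq, zero_add] at h
  rw [one_div, ← Real.rpow_neg (by linarith [le_abs_self x])] at h
  refine h.congr_fun fun n => ?_
  rw [poch_eq_factorial_mul_choose, smul_eq_mul]
  field_simp

lemma poch_pos {a : ℝ} (ha : 0 < a) (n : ℕ) : 0 < poch a n := by
  rw [poch_eq_eval_ascPochhammer]
  exact ascPochhammer_pos n a ha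

lemma Gamma_add_natCast_eq_mul_poch {a : ℝ} (ha : 0 < a) (n : ℕ) :
    Gamma (a + n) = Gamma a * poch a n := by
  induction n with
  | zero => simp [poch]
  | succ n ih =>
    rw [Nat.cast_succ, ← add_assoc, Gamma_add_one (by positivity), ih, poch]
    ring

section Laplace

variable {a b p : ℝ}

lemma integrableOn_rpow_mul_exp_neg_mul (hb : 0 < b) (hp : 0 < p) :
    IntegrableOn (fun t : ℝ => t ^ (b - 1) * exp (-(p * t))) (Ioi 0) :=
  .of_integral_ne_zero <| by
    rw [integral_rpow_mul_exp_neg_mul_Ioi hb hp]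
    exact (mul_pos (by positivity) (Gamma_pos_of_pos hb)).ne'

lemma integral_rpow_add_natCast_mul_exp_neg_mul (hb : 0 < b) (hp : 0 < p) (n : ℕ) :
    ∫ t in Ioi 0, t ^ (b + n - 1) * exp (-(p * t)) = Gamma b * poch b n * p ^ (-(b + n)) := by
  rw [integral_rpow_mul_exp_neg_mul_Ioi (by positivity) hp, Gamma_add_natCast_eq_mul_poch hb,
    one_div, inv_rpow hp.le, rpow_neg hp.le]
  ring

lemma integral_hyp1F1_term (hb : 0 < b) (hp : 0 < p) (l : ℝ) (n : ℕ) :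
    ∫ t in Ioi 0, poch a n / poch b n * l ^ n / n ! * (t ^ (b + n - 1) * exp (-(p * t)))
      = Gamma b * p ^ (-b) * (poch a n * (l / p) ^ n / n !) := by
  rw [integral_const_mul, integral_rpow_add_natCast_mul_exp_neg_mul hb hp, neg_add,
    rpow_add hp, rpow_neg hp.le (n : ℝ), rpow_natCast]
  rw [div_pow]
  have := (poch_pos hb n).ne'
  field_simp

lemma rpow_mul_exp_mul_hyp1F1_eq_tsum (a b p l : ℝ) {t : ℝ} (ht : 0 < t) :
    t ^ (b - 1) * exp (-(p * t)) * hyp1F1 a b (l * t) =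
      ∑' n : ℕ, poch a n / poch b n * l ^ n / n ! * (t ^ (b + n - 1) * exp (-(p * t))) := by
  rw [hyp1F1, ← tsum_mul_left]
  refine tsum_congr fun n => ?_
  rw [add_sub_right_comm, rpow_add ht, rpow_natCast, mul_pow]
  ring

theorem integral_rpow_mul_exp_neg_mul_mul_hyp1F1 {l : ℝ} (ha : 0 < a) (hb : 0 < b) (hp : 0 < p)
    (hl : |l| < p) :
    ∫ t in Ioi 0, t ^ (b - 1) * exp (-(p * t)) * hyp1F1 a b (l * t)
      = Gamma b * p ^ (a - b) * (p - l) ^ (-a) := by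
  set F : ℕ → ℝ → ℝ := fun n t =>
    poch a n / poch b n * l ^ n / n ! * (t ^ (b + n - 1) * exp (-(p * t))) with hF
  have hF_int (n : ℕ) : IntegrableOn (F n) (Ioi 0) :=
    (integrableOn_rpow_mul_exp_neg_mul (b := b + n) (by positivity) hp).const_mul _
  have hF_norm (n : ℕ) :
      ∫ t in Ioi 0, ‖F n t‖ = Gamma b * p ^ (-b) * (poch a n * (|l| / p) ^ n / n !) := by
    rw [← integral_hyp1F1_term hb hp |l| n]
    refine setIntegral_congr_fun measurableSet_Ioi fun t (ht : 0 < t) => ?_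
    simp [hF, abs_of_pos (poch_pos ha n), abs_of_pos (poch_pos hb n), rpow_nonneg ht.le]
  have h_ratio (x : ℝ) (hx : |x| ≤ |l|) : |x / p| < 1 := by
    rw [abs_div, abs_of_pos hp, div_lt_one hp]
    exact hx.trans_lt hl
  have hsum := (hasSum_poch_mul_pow_div_factorial a (h_ratio l le_rfl)).mul_left
    (Gamma b * p ^ (-b))
  have hsum_norm := (hasSum_poch_mul_pow_div_factorial a (h_ratio |l| (abs_abs l).le)).mul_left
    (Gamma b * p ^ (-b))
  have hF_summable : Summable fun n => ∫ t in Ioi 0, ‖F n t‖ := by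
    simp only [hF_norm]
    exact hsum_norm.summable
  calc ∫ t in Ioi 0, t ^ (b - 1) * exp (-(p * t)) * hyp1F1 a b (l * t)
      = ∫ t in Ioi 0, ∑' n, F n t :=
        setIntegral_congr_fun measurableSet_Ioi fun _ ↦ rpow_mul_exp_mul_hyp1F1_eq_tsum a b p l
    _ = ∑' n, ∫ t in Ioi 0, F n t :=
        (integral_tsum_of_summable_integral_norm hF_int hF_summable).symm
    _ = Gamma b * p ^ (-b) * (1 - l / p) ^ (-a) := by
        simp_rw [hF, integral_hyp1F1_term hb hp]
        exact hsum.tsum_eq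
    _ = Gamma b * p ^ (a - b) * (p - l) ^ (-a) := by
        have hpl : 0 < p - l := sub_pos.2 ((le_abs_self l).trans_lt hl)
        rw [one_sub_div hp.ne', div_rpow hpl.le hp.le, rpow_sub hp, rpow_neg hp.le, rpow_neg hp.le]
        field_simp

end Laplace

/-- The Laplace transform of the κ-μ shadowed density:
`∫₀^∞ e^(−sx) f(x) dx = (1 + θ₁ s)^(m−μ) (1 + θ₂ s)^(−m)` for `s ≥ 0`. -/
theorem kmu_laplace (κ μ m hbar : ℝ) (hκ : 0 < κ) (hμ : 0 < μ) (hm : 0 < m)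
    (hhbar : 0 < hbar) (θ1 θ2 : ℝ) (hθ1 : θ1 = hbar / (μ * (1 + κ)))
    (hθ2 : θ2 = (μ * κ + m) * hbar / (μ * (1 + κ) * m)) (s : ℝ) (hs : 0 ≤ s) :
    (∫ x in Set.Ioi (0 : ℝ), Real.exp (-(s * x)) * kmuPDF κ μ m hbar x)
      = (1 + θ1 * s) ^ (m - μ) * (1 + θ2 * s) ^ (-m) := by
  have hθ1_pos : 0 < θ1 := hθ1 ▸ by positivity
  have hθ2_eq : θ2 = θ1 * (1 + μ * κ / m) := by rw [hθ1, hθ2]; field_simp; ring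
  have hθ2_pos : 0 < θ2 := hθ2_eq ▸ by positivity
  have hθ1_lt : θ1 < θ2 := hθ2_eq ▸ lt_mul_right hθ1_pos (lt_add_of_pos_right 1 (by positivity))
  set p := s + θ1⁻¹ with hp_def
  set l := θ1⁻¹ - θ2⁻¹ with hl_def
  have hp : 0 < p := by positivity
  have hl : |l| < p := by
    rw [abs_of_pos (sub_pos.2 (inv_strictAnti₀ hθ1_pos hθ1_lt))]
    linarith [inv_pos.2 hθ2_pos]
  have h_integrand (x : ℝ) : exp (-(s * x)) * kmuPDF κ μ m hbar x
      = θ1 ^ (m - μ) / (θ2 ^ m * Gamma μ) *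
          (x ^ (μ - 1) * exp (-(p * x)) * hyp1F1 m μ (l * x)) := by
    rw [kmuPDF, ← hθ1, ← hθ2, show (θ2 - θ1) / (θ1 * θ2) = l by rw [hl_def]; field_simp,
      show -(p * x) = -(s * x) + -x / θ1 by ring, exp_add]
    ring
  have h_one_add_θ1 : 1 + θ1 * s = θ1 * p := by rw [hp_def]; field_simp; ring
  have h_one_add_θ2 : 1 + θ2 * s = θ2 * (p - l) := by rw [hp_def, hl_def]; field_simp; ring
  have hpl : 0 < p - l := sub_pos.2 ((le_abs_self l).trans_lt hl)
  simp_rw [h_integrand]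
  rw [integral_const_mul, integral_rpow_mul_exp_neg_mul_mul_hyp1F1 hm hμ hp hl, h_one_add_θ1,
    h_one_add_θ2, mul_rpow hθ1_pos.le hp.le, mul_rpow hθ2_pos.le hpl.le, rpow_neg hθ2_pos.le]
  have := Gamma_pos_of_pos hμ
  field_simp
end

section
/- (Exclusion-zone interference integral, Appendix III.) Let ν be a probability measure on [0,∞), let α > 2, set δ = 2/α, and assume ∫ h^δ dν(h) < ∞. Then for every R > 0 and s > 0, with z = s R^{−α}, ∫_R^∞ (1 − ∫ e^{−s h l^{−α}} dν(h)) · l dl = (R²/2) · ( ∫ (z h)^δ γ(1−δ, z h) dν(h) − (1 − ∫ e^{−z h} dν(h)) ). -/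
open Real MeasureTheory Set Filter

/-!
For fixed `h`, put `c = s h` and `δ = 2 / α`. On `(0, ∞)` the function
`F(l) = l² / 2 · (1 - e^{-c l^{-α}}) - c^δ / 2 · γ(1 - δ, c l^{-α})`
is a primitive of `(1 - e^{-c l^{-α}}) l`: the two terms produced by the chain rule cancel
because `c^δ (c l^{-α})^{-δ} = l²`. Since `α > 2` we have `l² (1 - e^{-c l^{-α}}) ≤ c l^{2-α} → 0`,
so `F → 0` at infinity and the integral over `(R, ∞)` equals `-F(R)`, which is the claimed
expression for the Dirac mass at `h`. The general case follows by Fubini–Tonelli, the integrand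
being nonnegative; integrability in `h` comes from `γ(1 - δ, ·) ≤ Γ(1 - δ)` and the moment
assumption on `ν`.
-/

noncomputable def lowerGamma (s x : ℝ) : ℝ :=
  ∫ t in Set.Ioc (0 : ℝ) x, t ^ (s - 1) * Real.exp (-t)

open scoped Topology

section LowerGamma

variable {s : ℝ}

lemma intervalIntegrable_rpow_sub_one_mul_exp_neg (hs : 0 < s) (a b : ℝ) :
    IntervalIntegrable (fun t => t ^ (s - 1) * exp (-t)) volume a b :=
  (intervalIntegral.intervalIntegrable_rpow' (by linarith)).mul_continuousOn
    (continuous_exp.comp continuous_neg).continuousOn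

lemma lowerGamma_eq_intervalIntegral {x : ℝ} (hx : 0 ≤ x) :
    lowerGamma s x = ∫ t in 0..x, t ^ (s - 1) * exp (-t) :=
  (intervalIntegral.integral_of_le hx).symm

lemma lowerGamma_of_nonpos {x : ℝ} (hx : x ≤ 0) : lowerGamma s x = 0 := by
  simp [lowerGamma, Ioc_eq_empty_of_le hx]

lemma lowerGamma_nonneg (s x : ℝ) : 0 ≤ lowerGamma s x :=
  setIntegral_nonneg measurableSet_Ioc fun t ht => by have := ht.1; positivity

lemma lowerGamma_le_Gamma (hs : 0 < s) (x : ℝ) : lowerGamma s x ≤ Gamma s := by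
  rw [Gamma_eq_integral hs]
  simp_rw [mul_comm (exp _)]
  refine setIntegral_mono_set ?_ ?_ Ioc_subset_Ioi_self.eventuallyLE
  · simpa only [mul_comm (exp _)] using GammaIntegral_convergent hs
  · filter_upwards [ae_restrict_mem measurableSet_Ioi] with t (ht : 0 < t)
    positivity

lemma continuous_lowerGamma (hs : 0 < s) : Continuous (lowerGamma s) := by
  have : lowerGamma s = fun x => ∫ t in 0..max x 0, t ^ (s - 1) * exp (-t) := by
    funext x
    rcases le_total x 0 with hx | hx
    · simp [lowerGamma_of_nonpos hx, max_eq_right hx]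
    · rw [lowerGamma_eq_intervalIntegral hx, max_eq_left hx]
  rw [this]
  exact (intervalIntegral.continuous_primitive (intervalIntegrable_rpow_sub_one_mul_exp_neg hs)
    0).comp (continuous_id.max continuous_const)

lemma hasDerivAt_lowerGamma (hs : 0 < s) {x : ℝ} (hx : 0 < x) :
    HasDerivAt (lowerGamma s) (x ^ (s - 1) * exp (-x)) x := by
  have hcont : ContinuousAt (fun t => t ^ (s - 1) * exp (-t)) x :=
    (continuousAt_id.rpow_const (Or.inl hx.ne')).mul
      (continuous_exp.comp continuous_neg).continuousAt
  have hmeas : Measurable fun t : ℝ => t ^ (s - 1) * exp (-t) := by fun_prop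
  refine (intervalIntegral.integral_hasDerivAt_right
    (intervalIntegrable_rpow_sub_one_mul_exp_neg hs 0 x)
    hmeas.stronglyMeasurable.stronglyMeasurableAtFilter hcont).congr_of_eventuallyEq ?_
  filter_upwards [Ioi_mem_nhds hx] with y hy using lowerGamma_eq_intervalIntegral (le_of_lt hy)

end LowerGamma

section Primitive

variable {α c : ℝ}

lemma one_sub_two_div_pos (hα : 2 < α) : 0 < 1 - 2 / α := by
  rw [sub_pos, div_lt_one (by linarith)]
  exact hα

lemma one_sub_exp_neg_nonneg {x : ℝ} (hx : 0 ≤ x) : 0 ≤ 1 - exp (-x) := by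
  simpa using exp_le_one_iff.2 (neg_nonpos.2 hx)

lemma mul_rpow_neg_rpow_div (hα : α ≠ 0) (hc : 0 ≤ c) {l : ℝ} (hl : 0 < l) :
    (c * l ^ (-α)) ^ (2 / α) = c ^ (2 / α) / l ^ 2 := by
  rw [mul_rpow hc (rpow_nonneg hl.le _), ← rpow_mul hl.le, neg_mul, mul_div_cancel₀ _ hα,
    rpow_neg hl.le, rpow_two, ← div_eq_mul_inv]

noncomputable def exclusionPrimitive (α c l : ℝ) : ℝ :=
  l ^ 2 / 2 * (1 - exp (-(c * l ^ (-α))))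
    - c ^ (2 / α) / 2 * lowerGamma (1 - 2 / α) (c * l ^ (-α))

lemma hasDerivAt_exclusionPrimitive (hα : 2 < α) (hc : 0 ≤ c) {l : ℝ} (hl : 0 < l) :
    HasDerivAt (exclusionPrimitive α c) ((1 - exp (-(c * l ^ (-α)))) * l) l := by
  rcases hc.eq_or_lt with rfl | hc
  · have hzero : exclusionPrimitive α 0 = fun _ => 0 := by
      funext l
      simp [exclusionPrimitive, zero_rpow (div_ne_zero two_ne_zero (by linarith : α ≠ 0))]
    simpa [hzero] using hasDerivAt_const l (0 : ℝ)
  set u := c * l ^ (-α) with hu_def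
  have hu : 0 < u := by positivity
  have hu' : HasDerivAt (fun l => c * l ^ (-α)) (c * (-α * l ^ (-α - 1))) l :=
    (hasDerivAt_rpow_const (Or.inl hl.ne')).const_mul c
  have key : c ^ (2 / α) * u ^ (1 - 2 / α - 1) = l ^ 2 := by
    rw [sub_sub_cancel_left, rpow_neg hu.le, hu_def, mul_rpow_neg_rpow_div (by linarith) hc.le hl,
      inv_div, mul_div_cancel₀ _ (by positivity)]
  have hexp : HasDerivAt (fun l => exp (-(c * l ^ (-α))))
      (exp (-u) * -(c * (-α * l ^ (-α - 1)))) l :=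
    hu'.fun_neg.exp
  refine ((((hasDerivAt_pow 2 l).div_const 2).mul (hexp.const_sub 1)).sub
    (((hasDerivAt_lowerGamma (one_sub_two_div_pos hα) hu).comp l hu').const_mul
      (c ^ (2 / α) / 2))).congr_deriv ?_
  rw [← hu_def]
  push_cast
  linear_combination (c * α * l ^ (-α - 1) * exp (-u) / 2) * key

lemma tendsto_exclusionPrimitive_atTop (hα : 2 < α) (hc : 0 ≤ c) :
    Tendsto (exclusionPrimitive α c) atTop (𝓝 0) := by
  have hu : Tendsto (fun l : ℝ => c * l ^ (-α)) atTop (𝓝 0) := by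
    simpa using (tendsto_rpow_neg_atTop (by linarith : 0 < α)).const_mul c
  have hγ : Tendsto (fun l => lowerGamma (1 - 2 / α) (c * l ^ (-α))) atTop (𝓝 0) := by
    have := ((continuous_lowerGamma (one_sub_two_div_pos hα)).tendsto 0).comp hu
    rwa [lowerGamma_of_nonpos le_rfl] at this
  have hdecay : Tendsto (fun l : ℝ => c / 2 * l ^ (-(α - 2))) atTop (𝓝 0) := by
    have := (tendsto_rpow_neg_atTop (by linarith : 0 < α - 2)).const_mul (c / 2)
    rwa [mul_zero] at this
  have hsq : Tendsto (fun l : ℝ => l ^ 2 / 2 * (1 - exp (-(c * l ^ (-α))))) atTop (𝓝 0) := by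
    refine tendsto_of_tendsto_of_tendsto_of_le_of_le' tendsto_const_nhds hdecay ?_ ?_
    · filter_upwards [eventually_gt_atTop 0] with l hl
      have := one_sub_exp_neg_nonneg (by positivity : 0 ≤ c * l ^ (-α))
      positivity
    · filter_upwards [eventually_gt_atTop 0] with l hl
      have hexp := add_one_le_exp (-(c * l ^ (-α)))
      have hpow : l ^ 2 * l ^ (-α) = l ^ (-(α - 2)) := by
        rw [← rpow_two, ← rpow_add hl]
        ring_nf
      calc l ^ 2 / 2 * (1 - exp (-(c * l ^ (-α)))) ≤ l ^ 2 / 2 * (c * l ^ (-α)) := by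
            gcongr
            linarith
        _ = c / 2 * l ^ (-(α - 2)) := by rw [← hpow]; ring
  have := hsq.sub (hγ.const_mul (c ^ (2 / α) / 2))
  rwa [mul_zero, sub_zero] at this

lemma one_sub_exp_neg_mul_rpow_mul_nonneg (hc : 0 ≤ c) {l : ℝ} (hl : 0 < l) :
    0 ≤ (1 - exp (-(c * l ^ (-α)))) * l :=
  mul_nonneg (one_sub_exp_neg_nonneg (by positivity)) hl.le

variable {R : ℝ}

lemma integrableOn_Ioi_one_sub_exp_neg_mul_rpow (hα : 2 < α) (hc : 0 ≤ c) (hR : 0 < R) :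
    IntegrableOn (fun l => (1 - exp (-(c * l ^ (-α)))) * l) (Ioi R) :=
  integrableOn_Ioi_deriv_of_nonneg'
    (fun _ hl => hasDerivAt_exclusionPrimitive hα hc (hR.trans_le hl))
    (fun _ hl => one_sub_exp_neg_mul_rpow_mul_nonneg hc (hR.trans hl))
    (tendsto_exclusionPrimitive_atTop hα hc)

lemma integral_Ioi_one_sub_exp_neg_mul_rpow (hα : 2 < α) (hc : 0 ≤ c) (hR : 0 < R) :
    ∫ l in Ioi R, (1 - exp (-(c * l ^ (-α)))) * l
      = R ^ 2 / 2 * ((c * R ^ (-α)) ^ (2 / α) * lowerGamma (1 - 2 / α) (c * R ^ (-α))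
          - (1 - exp (-(c * R ^ (-α))))) := by
  rw [integral_Ioi_of_hasDerivAt_of_nonneg'
      (fun _ hl => hasDerivAt_exclusionPrimitive hα hc (hR.trans_le hl))
      (fun _ hl => one_sub_exp_neg_mul_rpow_mul_nonneg hc (hR.trans hl))
      (tendsto_exclusionPrimitive_atTop hα hc),
    mul_rpow_neg_rpow_div (by linarith) hc hR, exclusionPrimitive]
  field_simp
  ring

end Primitive

section Averaging

variable {X Y : Type*} [MeasurableSpace X] [MeasurableSpace Y]

theorem integral_integral_swap_of_nonneg {μ : Measure X} {ν : Measure Y} [SFinite μ] [SFinite ν]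
    {f : X → Y → ℝ} (hf : AEStronglyMeasurable (Function.uncurry f) (μ.prod ν))
    (hf_nonneg : ∀ᵐ y ∂ν, ∀ᵐ x ∂μ, 0 ≤ f x y) (hf_int : ∀ᵐ y ∂ν, Integrable (fun x => f x y) μ)
    (hF_int : Integrable (fun y => ∫ x, f x y ∂μ) ν) :
    ∫ x, ∫ y, f x y ∂ν ∂μ = ∫ y, ∫ x, f x y ∂μ ∂ν := by
  refine integral_integral_swap ((integrable_prod_iff' hf).2 ⟨hf_int, hF_int.congr ?_⟩)
  filter_upwards [hf_nonneg] with y hy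
  exact integral_congr_ae (by filter_upwards [hy] with x hx using (norm_of_nonneg hx).symm)

lemma one_sub_integral_mul_eq_integral {ν : Measure Y} [IsProbabilityMeasure ν] {g : Y → ℝ}
    (hg : Integrable g ν) (a : ℝ) : (1 - ∫ y, g y ∂ν) * a = ∫ y, (1 - g y) * a ∂ν := by
  rw [integral_mul_const, integral_sub (integrable_const 1) hg]
  simp

lemma integrable_exp_neg_mul {ν : Measure ℝ} [IsFiniteMeasure ν] (hν : ∀ᵐ h ∂ν, 0 ≤ h) {c : ℝ}
    (hc : 0 ≤ c) : Integrable (fun h => exp (-(c * h))) ν := by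
  refine (integrable_const (1 : ℝ)).mono' (by fun_prop : Measurable fun h : ℝ =>
    exp (-(c * h))).aestronglyMeasurable ?_
  filter_upwards [hν] with h hh
  simpa using mul_nonneg hc hh

lemma integrable_rpow_mul_lowerGamma {ν : Measure ℝ} {δ s z : ℝ} (hs : 0 < s) (hz : 0 ≤ z)
    (hν : ∀ᵐ h ∂ν, 0 ≤ h) (hmom : Integrable (fun h : ℝ => h ^ δ) ν) :
    Integrable (fun h => (z * h) ^ δ * lowerGamma s (z * h)) ν := by
  have hmeas : Measurable fun h : ℝ => (z * h) ^ δ * lowerGamma s (z * h) :=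
    (by fun_prop : Measurable fun h : ℝ => (z * h) ^ δ).mul
      ((continuous_lowerGamma hs).measurable.comp (measurable_const_mul z))
  refine (hmom.const_mul (z ^ δ * Gamma s)).mono' hmeas.aestronglyMeasurable ?_
  filter_upwards [hν] with h hh
  rw [norm_of_nonneg (by have := lowerGamma_nonneg s (z * h); positivity), mul_rpow hz hh]
  calc z ^ δ * h ^ δ * lowerGamma s (z * h) ≤ z ^ δ * h ^ δ * Gamma s := by
        gcongr
        exact lowerGamma_le_Gamma hs _
    _ = z ^ δ * Gamma s * h ^ δ := by ring

end Averaging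

/-- Exclusion-zone interference integral (Appendix III): for a probability measure ν on [0,∞),
`∫_R^∞ (1 − ∫ e^(−s h l^(−α)) dν(h)) l dl
  = (R²/2) (∫ (zh)^δ γ(1−δ, zh) dν(h) − (1 − ∫ e^(−zh) dν(h)))` with `z = s R^(−α)`. -/
theorem exclusion_zone_integral (ν : Measure ℝ) [IsProbabilityMeasure ν]
    (hsupp : ν (Set.Iio 0) = 0)
    (α : ℝ) (hα : 2 < α) (δ : ℝ) (hδ : δ = 2 / α)
    (hmom : Integrable (fun h : ℝ => h ^ δ) ν)
    (R : ℝ) (hR : 0 < R) (s : ℝ) (hs : 0 < s) (z : ℝ) (hz : z = s * R ^ (-α)) :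
    (∫ l in Set.Ioi R, (1 - ∫ h, Real.exp (-(s * h * l ^ (-α))) ∂ν) * l)
      = R ^ 2 / 2 *
        ((∫ h, (z * h) ^ δ * lowerGamma (1 - δ) (z * h) ∂ν)
          - (1 - ∫ h, Real.exp (-(z * h)) ∂ν)) := by
  subst hδ hz
  have hν : ∀ᵐ h ∂ν, 0 ≤ h := by
    rw [ae_iff]
    simp only [not_le]
    exact hsupp
  have hz : 0 ≤ s * R ^ (-α) := by positivity
  have hexp_int := integrable_exp_neg_mul hν hz
  have hγ_int := integrable_rpow_mul_lowerGamma (one_sub_two_div_pos hα) hz hν hmom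
  have hφ_int := (hγ_int.sub' ((integrable_const 1).sub' hexp_int)).const_mul (R ^ 2 / 2)
  have hinner : (fun h => ∫ l in Ioi R, (1 - exp (-(s * h * l ^ (-α)))) * l) =ᵐ[ν] fun h =>
      R ^ 2 / 2 * ((s * R ^ (-α) * h) ^ (2 / α) * lowerGamma (1 - 2 / α) (s * R ^ (-α) * h)
        - (1 - exp (-(s * R ^ (-α) * h)))) := by
    filter_upwards [hν] with h hh
    rw [integral_Ioi_one_sub_exp_neg_mul_rpow hα (by positivity) hR, mul_right_comm s h]
  calc (∫ l in Ioi R, (1 - ∫ h, exp (-(s * h * l ^ (-α))) ∂ν) * l)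
      = ∫ l in Ioi R, ∫ h, (1 - exp (-(s * h * l ^ (-α)))) * l ∂ν := by
        refine setIntegral_congr_fun measurableSet_Ioi fun l (hl : R < l) => ?_
        simp_rw [mul_right_comm s _ (l ^ (-α))]
        exact one_sub_integral_mul_eq_integral
          (integrable_exp_neg_mul hν (by have := hR.trans hl; positivity)) l
    _ = ∫ h, (∫ l in Ioi R, (1 - exp (-(s * h * l ^ (-α)))) * l) ∂ν := by
        refine integral_integral_swap_of_nonneg (Measurable.aestronglyMeasurable (by fun_prop))
          ?_ ?_ (hφ_int.congr hinner.symm)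
        · filter_upwards [hν] with h hh
          filter_upwards [ae_restrict_mem measurableSet_Ioi] with l (hl : R < l)
          exact one_sub_exp_neg_mul_rpow_mul_nonneg (by positivity) (hR.trans hl)
        · filter_upwards [hν] with h hh
          exact integrableOn_Ioi_one_sub_exp_neg_mul_rpow hα (by positivity) hR
    _ = _ := by
        rw [integral_congr_ae hinner, integral_const_mul,
          integral_sub hγ_int ((integrable_const 1).sub' hexp_int),
          integral_sub (integrable_const 1) hexp_int]
        simp
end

section
/- (Lemma 4, Rayleigh case.) Let h̄ > 0, δ ∈ (0,1), and let f_R be the exponential density with mean h̄, i.e. f_R(x) = (1/h̄) e^{−x/h̄} on (0,∞). Then for every z > 0 with h̄ z < 1 (so that the Gauss hypergeometric series below converges), ∫₀^∞ ( (z x)^δ γ(1−δ, z x) − (1 − e^{−z x}) ) f_R(x) dx = (h̄ δ z/(1−δ)) · ₂F₁(1, 1−δ; 2−δ; −h̄ z). -/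
open Real MeasureTheory Set Filter

/-- Gauss hypergeometric function `₂F₁(a, b; c; x) = Σ ((a)_n (b)_n/(c)_n) xⁿ/n!`. -/
noncomputable def hyp2F1 (a b c x : ℝ) : ℝ :=
  ∑' n : ℕ, (poch a n * poch b n / poch c n) * x ^ n / n.factorial

/-!
Both `y ^ δ γ(1 - δ, y)` and `1 - e^{-y}` are entire power series in `y`, and their difference is
`∑ δ (-1)ⁿ yⁿ⁺¹ / (n! (n + 1) (n + 1 - δ))`. Integrating term by term against the exponential
density, the moment `(n + 1)! h̄ⁿ⁺¹` cancels the factorials and leaves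
`δ ∑ (-1)ⁿ (h̄ z)ⁿ⁺¹ / (n + 1 - δ)`, which is the series of `₂F₁(1, 1 - δ; 2 - δ; -h̄ z)`.
The interchange is justified because, for `h̄ z < 1`, the absolute series is dominated by a
geometric one.
-/

open scoped Nat

lemma poch_one_eq_factorial (n : ℕ) : poch 1 n = n ! := by
  induction n with
  | zero => simp [poch]
  | succ n ih => rw [poch, ih, Nat.factorial_succ]; push_cast; ring

lemma poch_mul_add (a : ℝ) (n : ℕ) : poch a n * (a + n) = a * poch (a + 1) n := by
  induction n with
  | zero => simp [poch]
  | succ n ih =>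
    simp only [poch]
    rw [← mul_assoc, ← ih]
    push_cast
    ring

lemma hyp2F1_one_self_add_one {b : ℝ} (hb : 0 < b) (x : ℝ) :
    hyp2F1 1 b (b + 1) x = ∑' n : ℕ, b / (b + n) * x ^ n := by
  refine tsum_congr fun n => ?_
  have hpoch : poch (b + 1) n = poch b n * (b + n) / b := by
    rw [poch_mul_add]; field_simp
  have := poch_pos hb n
  rw [poch_one_eq_factorial, hpoch]
  field_simp

lemma MeasureTheory.hasSum_integral_mul_of_hasSum {α : Type*} [MeasurableSpace α]
    {μ : Measure α} {c : ℕ → ℝ} {g : ℕ → α → ℝ} {f : α → ℝ}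
    (hf : ∀ᵐ a ∂μ, HasSum (fun n => c n * g n a) (f a))
    (hg_nonneg : ∀ n, 0 ≤ᵐ[μ] g n) (hg_int : ∀ n, Integrable (g n) μ)
    (hsum : Summable fun n => |c n| * ∫ a, g n a ∂μ) :
    HasSum (fun n => c n * ∫ a, g n a ∂μ) (∫ a, f a ∂μ) := by
  have hnorm : ∀ n, ∫ a, ‖c n * g n a‖ ∂μ = |c n| * ∫ a, g n a ∂μ := fun n => by
    rw [← integral_const_mul]
    refine integral_congr_ae ((hg_nonneg n).mono fun a ha => ?_)
    simp [abs_of_nonneg ha]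
  have := hasSum_integral_of_summable_integral_norm (fun n => (hg_int n).const_mul (c n))
    (by simpa only [hnorm] using hsum)
  simp only [integral_const_mul] at this
  rwa [integral_congr_ae (hf.mono fun a ha => ha.tsum_eq)] at this

lemma hasSum_pow_div_factorial_exp (x : ℝ) : HasSum (fun n : ℕ => x ^ n / n !) (exp x) := by
  rw [exp_eq_exp_ℝ]
  exact NormedSpace.expSeries_div_hasSum_exp x

lemma rpow_sub_one_mul_pow {t : ℝ} (ht : 0 < t) (s : ℝ) (n : ℕ) :
    t ^ (s - 1) * t ^ n = t ^ (s + n - 1) := by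
  rw [← rpow_add_natCast ht.ne', sub_add_eq_add_sub]

lemma integrableOn_Ioc_rpow_mul_pow {s : ℝ} (hs : 0 < s) (y : ℝ) (n : ℕ) :
    IntegrableOn (fun t : ℝ => t ^ (s - 1) * t ^ n) (Ioc 0 y) := by
  have hr : -1 < s + n - 1 := by linarith [n.cast_nonneg (α := ℝ)]
  exact (intervalIntegral.intervalIntegrable_rpow' hr).1.congr_fun
    (fun t ht => (rpow_sub_one_mul_pow ht.1 s n).symm) measurableSet_Ioc

lemma integral_Ioc_rpow_mul_pow {s y : ℝ} (hs : 0 < s) (hy : 0 ≤ y) (n : ℕ) :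
    ∫ t in Ioc 0 y, t ^ (s - 1) * t ^ n = y ^ (s + n) / (s + n) := by
  have hsn : 0 < s + n := by positivity
  rw [setIntegral_congr_fun measurableSet_Ioc fun t ht => rpow_sub_one_mul_pow ht.1 s n,
    ← intervalIntegral.integral_of_le hy, integral_rpow (Or.inl (by linarith)), sub_add_cancel,
    zero_rpow hsn.ne', sub_zero]

lemma hasSum_lowerGamma {s y : ℝ} (hs : 0 < s) (hy : 0 ≤ y) :
    HasSum (fun n : ℕ => (-1 : ℝ) ^ n / (n ! * (s + n)) * y ^ (s + n)) (lowerGamma s y) := by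
  have hseries : ∀ᵐ t : ℝ ∂(volume.restrict (Ioc 0 y)),
      HasSum (fun n : ℕ => (-1 : ℝ) ^ n / n ! * (t ^ (s - 1) * t ^ n))
        (t ^ (s - 1) * exp (-t)) :=
    Eventually.of_forall fun t =>
      ((hasSum_pow_div_factorial_exp (-t)).mul_left (t ^ (s - 1))).congr_fun fun n => by
        rw [neg_pow]; ring
  have hnonneg (n : ℕ) : 0 ≤ᵐ[volume.restrict (Ioc 0 y)] fun t : ℝ => t ^ (s - 1) * t ^ n := by
    filter_upwards [ae_restrict_mem measurableSet_Ioc] with t ht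
    exact mul_nonneg (rpow_nonneg ht.1.le _) (pow_nonneg ht.1.le _)
  have hsum : Summable fun n : ℕ => |(-1 : ℝ) ^ n / n !| * (y ^ (s + n) / (s + n)) := by
    refine Summable.of_nonneg_of_le (fun n => by positivity) (fun n => ?_)
      ((Real.summable_pow_div_factorial y).mul_left (y ^ s / s))
    have hsn : 0 < s + n := by positivity
    calc |(-1 : ℝ) ^ n / n !| * (y ^ (s + n) / (s + n)) = y ^ s * y ^ n / n ! / (s + n) := by
          rw [abs_div, abs_pow, abs_neg, abs_one, one_pow, Nat.abs_cast,
            rpow_add_natCast' hy hsn.ne']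
          ring
      _ ≤ y ^ s * y ^ n / n ! / s := by gcongr; exact le_add_of_nonneg_right n.cast_nonneg
      _ = y ^ s / s * (y ^ n / n !) := by ring
  convert hasSum_integral_mul_of_hasSum hseries hnonneg (integrableOn_Ioc_rpow_mul_pow hs y)
    (by simpa only [integral_Ioc_rpow_mul_pow hs hy] using hsum) using 2 with n
  · rw [integral_Ioc_rpow_mul_pow hs hy]
    field_simp
  · rfl

lemma hasSum_one_sub_exp_neg (y : ℝ) :
    HasSum (fun n : ℕ => (-1 : ℝ) ^ n / (n + 1)! * y ^ (n + 1)) (1 - exp (-y)) := by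
  have htail := (hasSum_nat_add_iff' 1).mpr (hasSum_pow_div_factorial_exp (-y))
  simp only [Finset.range_one, Finset.sum_singleton, pow_zero, Nat.factorial_zero, Nat.cast_one,
    div_one] at htail
  rw [show 1 - exp (-y) = -(exp (-y) - 1) by ring]
  exact htail.neg.congr_fun fun n => by rw [neg_pow]; ring

lemma hasSum_rpow_mul_lowerGamma_sub_one_sub_exp_neg {δ y : ℝ} (hδ : δ < 1) (hy : 0 < y) :
    HasSum (fun n : ℕ => δ * (-1 : ℝ) ^ n / (n ! * (n + 1) * (1 - δ + n)) * y ^ (n + 1))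
      (y ^ δ * lowerGamma (1 - δ) y - (1 - exp (-y))) := by
  refine (((hasSum_lowerGamma (by linarith) hy.le).mul_left (y ^ δ)).sub
    (hasSum_one_sub_exp_neg y)).congr_fun fun n => ?_
  have hpow : y ^ δ * y ^ (1 - δ + n) = y ^ (n + 1) := by
    rw [← rpow_add hy, ← rpow_natCast]; push_cast; ring_nf
  have hδn : 1 - δ + n ≠ 0 := by linarith [n.cast_nonneg (α := ℝ)]
  rw [mul_left_comm, hpow, Nat.factorial_succ]
  push_cast
  field_simp
  ring

lemma integral_Ioi_pow_mul_exp_neg_div {h : ℝ} (hh : 0 < h) (n : ℕ) :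
    ∫ x in Ioi 0, x ^ n * exp (-x / h) = n ! * h ^ (n + 1) := by
  have := integral_rpow_mul_exp_neg_mul_Ioi (a := n + 1) (r := 1 / h) (by positivity)
    (by positivity)
  rw [add_sub_cancel_right, one_div_one_div, Gamma_nat_eq_factorial, ← Nat.cast_succ,
    rpow_natCast] at this
  simp only [rpow_natCast, neg_div, one_div, inv_mul_eq_div] at this ⊢
  rw [this, mul_comm]

lemma integrableOn_Ioi_pow_mul_exp_neg_div {h : ℝ} (hh : 0 < h) (n : ℕ) :
    IntegrableOn (fun x : ℝ => x ^ n * exp (-x / h)) (Ioi 0) := by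
  have := integrableOn_rpow_mul_exp_neg_mul_rpow (s := n) (p := 1) (b := 1 / h)
    (by linarith [n.cast_nonneg (α := ℝ)]) one_pos (by positivity)
  simp only [rpow_natCast, rpow_one] at this
  refine this.congr_fun (fun x _ => ?_) measurableSet_Ioi
  ring_nf

lemma summable_abs_mul_pow_succ_div_one_sub_add {δ q : ℝ} (hδ : δ < 1) (hq0 : 0 ≤ q)
    (hq : q < 1) : Summable fun n : ℕ => |δ * (-1 : ℝ) ^ n * q ^ (n + 1) / (1 - δ + n)| := by
  refine Summable.of_nonneg_of_le (fun n => abs_nonneg _) (fun n => ?_)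
    ((summable_geometric_of_lt_one hq0 hq).mul_left (|δ| / (1 - δ) * q))
  have hδn : 0 < 1 - δ + n := by linarith [n.cast_nonneg (α := ℝ)]
  calc |δ * (-1 : ℝ) ^ n * q ^ (n + 1) / (1 - δ + n)| = |δ| / (1 - δ + n) * q ^ (n + 1) := by
        rw [abs_div, abs_mul, abs_mul, abs_pow, abs_neg, abs_one, one_pow, mul_one,
          abs_of_pos hδn, abs_of_nonneg (pow_nonneg hq0 _)]
        ring
    _ ≤ |δ| / (1 - δ) * q ^ (n + 1) := by
        gcongr
        linarith
    _ = |δ| / (1 - δ) * q * q ^ n := by ring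

lemma hasSum_integral_Ioi_rpow_mul_lowerGamma_sub_mul_exp {δ h z : ℝ} (hδ : δ < 1) (hh : 0 < h)
    (hz : 0 < z) (hhz : h * z < 1) :
    HasSum (fun n : ℕ => δ * (-1 : ℝ) ^ n * (h * z) ^ (n + 1) / (1 - δ + n))
      (∫ x in Ioi 0, ((z * x) ^ δ * lowerGamma (1 - δ) (z * x) - (1 - exp (-(z * x)))) *
        (1 / h * exp (-x / h))) := by
  set c : ℕ → ℝ := fun n => δ * (-1 : ℝ) ^ n / (n ! * (n + 1) * (1 - δ + n)) * z ^ (n + 1) / h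
  have hterm (n : ℕ) : c n * ∫ x in Ioi 0, x ^ (n + 1) * exp (-x / h) =
      δ * (-1 : ℝ) ^ n * (h * z) ^ (n + 1) / (1 - δ + n) := by
    rw [integral_Ioi_pow_mul_exp_neg_div hh, Nat.factorial_succ]
    simp only [c]
    have : 0 < 1 - δ + n := by linarith [n.cast_nonneg (α := ℝ)]
    push_cast
    field_simp
    ring
  have hseries : ∀ᵐ x : ℝ ∂(volume.restrict (Ioi 0)), HasSum
      (fun n => c n * (x ^ (n + 1) * exp (-x / h)))
      (((z * x) ^ δ * lowerGamma (1 - δ) (z * x) - (1 - exp (-(z * x)))) *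
        (1 / h * exp (-x / h))) := by
    filter_upwards [ae_restrict_mem measurableSet_Ioi] with x hx
    refine ((hasSum_rpow_mul_lowerGamma_sub_one_sub_exp_neg hδ (mul_pos hz hx)).mul_right
      (1 / h * exp (-x / h))).congr_fun fun n => ?_
    rw [mul_pow]
    ring
  have hnonneg (n : ℕ) :
      0 ≤ᵐ[volume.restrict (Ioi 0)] fun x : ℝ => x ^ (n + 1) * exp (-x / h) := by
    filter_upwards [ae_restrict_mem measurableSet_Ioi] with x hx
    exact mul_nonneg (pow_nonneg (le_of_lt hx) _) (exp_nonneg _)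
  refine (hasSum_integral_mul_of_hasSum hseries hnonneg
    (fun n => integrableOn_Ioi_pow_mul_exp_neg_div hh (n + 1)) ?_).congr_fun fun n => (hterm n).symm
  refine (summable_abs_mul_pow_succ_div_one_sub_add hδ (by positivity) hhz).congr fun n => ?_
  rw [← hterm, abs_mul, abs_of_nonneg (integral_nonneg_of_ae (hnonneg n))]

theorem rayleigh_W_general (hbar : ℝ) (hhbar : 0 < hbar)
    (δ : ℝ) (hδ1 : δ < 1)
    (z : ℝ) (hz : 0 < z) (hconv : hbar * z < 1) :
    (∫ x in Set.Ioi (0 : ℝ),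
        ((z * x) ^ δ * lowerGamma (1 - δ) (z * x) - (1 - Real.exp (-(z * x)))) *
          (1 / hbar * Real.exp (-x / hbar)))
      = hbar * δ * z / (1 - δ) * hyp2F1 1 (1 - δ) (2 - δ) (-(hbar * z)) := by
  have hb : 0 < 1 - δ := by linarith
  rw [show 2 - δ = 1 - δ + 1 by ring, hyp2F1_one_self_add_one hb, ← tsum_mul_left,
    ← (hasSum_integral_Ioi_rpow_mul_lowerGamma_sub_mul_exp hδ1 hhbar hz hconv).tsum_eq]
  refine tsum_congr fun n => ?_
  have : 1 - δ + n ≠ 0 := by linarith [n.cast_nonneg (α := ℝ)]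
  rw [neg_pow, pow_succ]
  field_simp
  ring

/-- Lemma 4 (Rayleigh case): with `f_R` the exponential density of mean `h̄`,
`∫₀^∞ ((zx)^δ γ(1−δ, zx) − (1 − e^(−zx))) f_R(x) dx
  = (h̄δz/(1−δ)) ₂F₁(1, 1−δ; 2−δ; −h̄z)`. -/
theorem rayleigh_W (hbar : ℝ) (hhbar : 0 < hbar)
    (δ : ℝ) (hδ0 : 0 < δ) (hδ1 : δ < 1)
    (z : ℝ) (hz : 0 < z) (hconv : hbar * z < 1) :
    (∫ x in Set.Ioi (0 : ℝ),
        ((z * x) ^ δ * lowerGamma (1 - δ) (z * x) - (1 - Real.exp (-(z * x)))) *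
          (1 / hbar * Real.exp (-x / hbar)))
      = hbar * δ * z / (1 - δ) * hyp2F1 1 (1 - δ) (2 - δ) (-(hbar * z)) :=
  rayleigh_W_general hbar hhbar δ hδ1 z hz hconv
end

section
/- (Appendix IV, κ-μ fading as the m → ∞ limit.) Let κ > 0, μ > 0, h̄ > 0 and s > 0 be fixed, set θ₁ = h̄/(μ(1+κ)), and for each real m > 0 set θ₂(m) = (μκ+m)h̄/(μ(1+κ)m). Then, as m → ∞ along the positive reals, (1 + θ₁ s)^{m−μ} (1 + θ₂(m) s)^{−m} converges to (1 + θ₁ s)^{−μ} · exp( −μκ θ₁ s/(1 + θ₁ s) ). -/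
open Real MeasureTheory Set Filter

/-! Writing `A = 1 + θ₁s`, the second factor splits as `1 + θ₂(m)s = A (1 + c/m)` with
`c = μκθ₁s/A`. The powers of `A` combine to `A^(-μ)`, and `(1 + c/m)^(-m) → exp(-c)`. -/

theorem one_add_div_mul_eq_mul_one_add_div {a h d θ m s : ℝ} (hθ : θ = h / d) (hm : m ≠ 0)
    (hA : 1 + θ * s ≠ 0) :
    1 + (a + m) * h / (d * m) * s = (1 + θ * s) * (1 + a * θ * s / (1 + θ * s) / m) := by
  have hθ₂ : (a + m) * h / (d * m) = (a + m) / m * θ := by rw [hθ]; ring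
  rw [hθ₂]
  field_simp
  ring

theorem eventually_one_add_div_pos (c : ℝ) : ∀ᶠ m : ℝ in atTop, 0 < 1 + c / m := by
  have hc : Tendsto (fun m : ℝ => c / m) atTop (nhds 0) :=
    tendsto_const_nhds.div_atTop tendsto_id
  filter_upwards [hc.eventually (lt_mem_nhds neg_one_lt_zero)] with m hm
  linarith

theorem tendsto_one_add_div_rpow_neg_exp (c : ℝ) :
    Tendsto (fun m : ℝ => (1 + c / m) ^ (-m)) atTop (nhds (exp (-c))) := by
  rw [exp_neg]
  refine ((tendsto_one_add_div_rpow_exp c).inv₀ (exp_ne_zero c)).congr' ?_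
  filter_upwards [eventually_one_add_div_pos c] with m hm
  rw [rpow_neg hm.le]

theorem tendsto_rpow_sub_mul_mul_one_add_div_rpow_neg {A : ℝ} (hA : 0 < A) (c μ : ℝ) :
    Tendsto (fun m : ℝ => A ^ (m - μ) * (A * (1 + c / m)) ^ (-m)) atTop
      (nhds (A ^ (-μ) * exp (-c))) := by
  refine ((tendsto_one_add_div_rpow_neg_exp c).const_mul (A ^ (-μ))).congr' ?_
  filter_upwards [eventually_one_add_div_pos c] with m hm
  rw [mul_rpow hA.le hm.le, ← mul_assoc, ← rpow_add hA]
  ring_nf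

/-- Appendix IV: κ-μ fading as the `m → ∞` limit of the κ-μ shadowed Laplace transform:
`(1 + θ₁s)^(m−μ) (1 + θ₂(m)s)^(−m) → (1 + θ₁s)^(−μ) exp(−μκθ₁s/(1 + θ₁s))`. -/
theorem kmu_shadowed_limit (κ μ hbar s : ℝ) (hκ : 0 < κ) (hμ : 0 < μ)
    (hhbar : 0 < hbar) (hs : 0 < s)
    (θ1 : ℝ) (hθ1 : θ1 = hbar / (μ * (1 + κ))) :
    Filter.Tendsto
      (fun m : ℝ =>
        (1 + θ1 * s) ^ (m - μ) * (1 + ((μ * κ + m) * hbar / (μ * (1 + κ) * m)) * s) ^ (-m))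
      Filter.atTop
      (nhds ((1 + θ1 * s) ^ (-μ) * Real.exp (-(μ * κ * θ1 * s / (1 + θ1 * s))))) := by
  have hA : 0 < 1 + θ1 * s := by
    have hθ1_pos : 0 < θ1 := by rw [hθ1]; positivity
    positivity
  refine (tendsto_rpow_sub_mul_mul_one_add_div_rpow_neg hA _ μ).congr' ?_
  filter_upwards [eventually_ne_atTop 0] with m hm
  rw [one_add_div_mul_eq_mul_one_add_div hθ1 hm hA.ne']
end

section
/- (Derivative identity for the rate function, eq. (46).) For every integer n ≥ 1 and every z > 0, (1/(n−1)!) · (dⁿ/dzⁿ)[ z^{n−1} ln(1+z) ] = (1/z) · ( 1 − (1+z)^{−n} ). -/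
/-! By the Leibniz rule, the `(m+1)`-st derivative of `log (1 + t) * t ^ m` at `z` is
`∑_{j ≤ m} C(m+1, j+1) · (-1)^j j! (1+z)^{-(j+1)} · (m!/j!) z^j`; the term carrying `log` itself
vanishes because `t ^ m` has zero `(m+1)`-st derivative. This is `m!/(-z)` times the binomial
expansion of `(1 - z/(1+z))^(m+1) - 1 = (1+z)^{-(m+1)} - 1`. -/

open Real Finset
open scoped Nat

theorem one_add_pow_sub_one {R : Type*} [CommRing R] (x : R) (n : ℕ) :
    (1 + x) ^ n - 1 = ∑ j ∈ range n, (n.choose (j + 1) : R) * x ^ (j + 1) := by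
  rw [add_comm, add_pow, sum_range_succ']
  simp [mul_comm]

theorem Real.iteratedDeriv_succ_log (k : ℕ) (x : ℝ) :
    iteratedDeriv (k + 1) log x = (-1) ^ k * k ! * (x ^ (k + 1))⁻¹ := by
  rw [iteratedDeriv_succ', deriv_log', iteratedDeriv_eq_iterate, iter_deriv_inv,
    show (-1 - k : ℤ) = -((k + 1 : ℕ) : ℤ) by push_cast; ring, zpow_neg, zpow_natCast]

theorem iteratedDeriv_pow_mul_log_one_add (m : ℕ) {z : ℝ} (hz : -1 < z) (hz₀ : z ≠ 0) :
    iteratedDeriv (m + 1) (fun t => t ^ m * log (1 + t)) z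
      = m ! * (1 - ((1 + z) ^ (m + 1))⁻¹) / z := by
  have hlog : ContDiffAt ℝ (m + 1) (fun t => log (1 + t)) z := by
    fun_prop (disch := linarith)
  have hpow : ContDiffAt ℝ (m + 1) (fun t : ℝ => t ^ m) z := by fun_prop
  have h1z : 1 + z ≠ 0 := by linarith
  have hterm : ∀ j ∈ range (m + 1),
      ((m + 1).choose (j + 1) : ℝ) * iteratedDeriv (j + 1) (fun t => log (1 + t)) z
        * iteratedDeriv (m + 1 - (j + 1)) (fun t => t ^ m) z
      = m ! / -z * ((m + 1).choose (j + 1) * (-z / (1 + z)) ^ (j + 1)) := by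
    intro j hj
    have hjm : j ≤ m := Nat.lt_succ_iff.mp (mem_range.mp hj)
    have hfac : (j ! * m.descFactorial (m - j) : ℝ) = m ! := by
      exact_mod_cast Nat.sub_sub_self hjm ▸ Nat.factorial_mul_descFactorial (m.sub_le j)
    rw [congrFun (iteratedDeriv_comp_const_add _ log 1) z, Real.iteratedDeriv_succ_log,
      iteratedDeriv_pow, Nat.add_sub_add_right, Nat.sub_sub_self hjm, ← hfac, div_pow, neg_pow]
    field_simp
    ring
  calc iteratedDeriv (m + 1) (fun t => t ^ m * log (1 + t)) z
      = iteratedDeriv (m + 1) (fun t => log (1 + t) * t ^ m) z := by simp only [mul_comm]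
    _ = m ! / -z * ((1 + -z / (1 + z)) ^ (m + 1) - 1) := by
      rw [iteratedDeriv_fun_mul hlog hpow, sum_range_succ', sum_congr rfl hterm, ← mul_sum,
        one_add_pow_sub_one]
      simp
    _ = m ! * (1 - ((1 + z) ^ (m + 1))⁻¹) / z := by
      rw [show 1 + -z / (1 + z) = (1 + z)⁻¹ by field_simp; ring, inv_pow]
      field_simp
      ring

/-- Derivative identity for the rate function (eq. (46)):
`(1/(n−1)!) dⁿ/dzⁿ [z^(n−1) ln(1+z)] = (1/z)(1 − (1+z)^(−n))` for `z > 0`. -/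
theorem rate_derivative_identity (n : ℕ) (hn : 1 ≤ n) (z : ℝ) (hz : 0 < z) :
    (1 / (n - 1).factorial : ℝ) *
        iteratedDeriv n (fun t => t ^ (n - 1) * Real.log (1 + t)) z
      = 1 / z * (1 - ((1 + z) ^ n)⁻¹) := by
  obtain ⟨m, rfl⟩ := Nat.exists_eq_add_of_le' hn
  rw [Nat.add_sub_cancel, iteratedDeriv_pow_mul_log_one_add m (by linarith) hz.ne']
  field_simp
end
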